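/- arXiv:math/0601038 — 6 statements merged into one kernel-verified Lean document; each statement's English description precedes it below -/
import Mathlib

section
/- Let g, h : [0,1] → ℝ be continuous, H ∈ (0,1), and write Δh_{k/n} = h((k+1)/n) − h(k/n). If sup_{t∈[0,1]} | n^{2H−1} ∑_{k=0}^{n−1} 1_{[0,t]}(k/n) (Δh_{k/n})² − t | → 0 as n → ∞, then sup_{t∈[0,1]} | n^{2H−1} ∑_{k=0}^{n−1} g(k/n) 1_{[0,t]}(k/n) (Δh_{k/n})² − ∫_0^t g(s) ds | → 0 as n → ∞. -/
/-!
Let `ν_n` be the discrete measure with masses `n^(2H-1) (Δh_{k/n})²` at the points `k/n`; the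
hypothesis says that the distribution functions `t ↦ ν_n [0,t]` converge to `t` uniformly on
`[0,1]`. Against `1_{(-∞,b]}` the sum over `[0,t]` is the distribution function at `min t b`, so
by linearity the claim holds for step functions built from these indicators. A continuous `g` is a
uniform limit of such step functions on `[0,1]`, and since the total masses `ν_n [0,1]` stay
bounded, the approximation error is uniform in `n` and `t`.
-/

open Filter Set MeasureTheory

theorem tendstoUniformlyOn_finsetSum {κ α β G : Type*} [AddCommGroup G] [UniformSpace G]
    [IsUniformAddGroup G] {p : Filter α} {S : Set β} (u : Finset κ) {F : κ → α → β → G}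
    {f : κ → β → G} (h : ∀ i ∈ u, TendstoUniformlyOn (F i) (f i) p S) :
    TendstoUniformlyOn (fun a => ∑ i ∈ u, F i a) (∑ i ∈ u, f i) p S := by
  classical
  induction u using Finset.induction_on with
  | empty => exact tendsto_const_nhds.tendstoUniformlyOn_const S
  | insert i u hi ih =>
    simp_rw [Finset.sum_insert hi]
    exact (h i (u.mem_insert_self i)).add (ih fun j hj => h j (Finset.mem_insert_of_mem hj))

theorem TendstoUniformlyOn.const_smul {M α β G : Type*} [UniformSpace G] [SMul M G]
    [UniformContinuousConstSMul M G] {p : Filter α} {S : Set β} {F : α → β → G} {f : β → G}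
    (h : TendstoUniformlyOn F f p S) (c : M) :
    TendstoUniformlyOn (fun a => c • F a) (c • f) p S :=
  (uniformContinuous_const_smul c).comp_tendstoUniformlyOn h

variable {ι : Type*}

/-- `discreteIntegral s x w φ t = ∫_{[0,t]} φ dν` for the discrete measure
`ν = ∑_{k ∈ s} w k δ_{x k}`. -/
noncomputable def discreteIntegral (s : Finset ι) (x w : ι → ℝ) : (ℝ → ℝ) →ₗ[ℝ] ℝ → ℝ where
  toFun φ t := ∑ k ∈ s, (Icc 0 t).indicator φ (x k) * w k
  map_add' φ ψ := by
    ext t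
    simp only [indicator_add', Pi.add_apply, add_mul, Finset.sum_add_distrib]
  map_smul' c φ := by
    ext t
    simp only [indicator_apply, Pi.smul_apply, smul_eq_mul, RingHom.id_apply, Finset.mul_sum,
      mul_ite, mul_zero, ite_mul, zero_mul, mul_assoc]

section

variable (s : Finset ι) (x w : ι → ℝ)

theorem discreteIntegral_apply (φ : ℝ → ℝ) (t : ℝ) :
    discreteIntegral s x w φ t = ∑ k ∈ s, (Icc 0 t).indicator φ (x k) * w k := rfl

theorem discreteIntegral_indicator_Iic (b t : ℝ) :
    discreteIntegral s x w ((Iic b).indicator 1) t = discreteIntegral s x w 1 (min t b) := by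
  have : Icc 0 t ∩ Iic b = Icc 0 (min t b) := by ext; simp [and_assoc]
  simp only [discreteIntegral_apply, indicator_indicator, this]

theorem abs_discreteIntegral_le (hw : ∀ k ∈ s, 0 ≤ w k) {φ : ℝ → ℝ} {t ε : ℝ}
    (hφ : ∀ y ∈ Icc 0 t, |φ y| ≤ ε) :
    |discreteIntegral s x w φ t| ≤ ε * discreteIntegral s x w 1 t := by
  rw [discreteIntegral_apply, discreteIntegral_apply, Finset.mul_sum]
  refine (Finset.abs_sum_le_sum_abs _ _).trans (Finset.sum_le_sum fun k hk => ?_)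
  rw [abs_mul, abs_of_nonneg (hw k hk), ← mul_assoc]
  refine mul_le_mul_of_nonneg_right ?_ (hw k hk)
  by_cases hxk : x k ∈ Icc 0 t
  · simpa [hxk] using hφ _ hxk
  · simp [hxk]

theorem mul_sum_mul_indicator_eq_discreteIntegral (v : ι → ℝ) (c : ℝ) (φ : ℝ → ℝ) (t : ℝ) :
    c * ∑ k ∈ s, φ (x k) * (Icc 0 t).indicator (fun _ => 1) (x k) * v k =
      discreteIntegral s x (fun k => c * v k) φ t := by
  simp only [discreteIntegral_apply, Finset.mul_sum, indicator_apply]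
  refine Finset.sum_congr rfl fun k _ => ?_
  split_ifs <;> ring

end

/-- Equal to `g (j / m)` on `((j - 1) / m, j / m]` (see `stepApprox_apply`), written through the
indicators of `Iic` because their discrete integrals are values of the distribution function. -/
noncomputable def stepApprox (g : ℝ → ℝ) (m : ℕ) : ℝ → ℝ :=
  g 1 • (Iic 1).indicator 1 -
    ∑ i ∈ Finset.range m, (g ((i + 1) / m) - g (i / m)) • (Iic ((i : ℝ) / m)).indicator 1

theorem stepApprox_apply (g : ℝ → ℝ) {m : ℕ} (hm : 0 < m) {x : ℝ} (hx : x ∈ Icc 0 1) :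
    stepApprox g m x = g (⌈m * x⌉₊ / m) := by
  have hm' : (0 : ℝ) < m := by exact_mod_cast hm
  have hceil : ⌈m * x⌉₊ ≤ m := Nat.ceil_le.mpr (by nlinarith [hx.2])
  have hle (i : ℕ) : x ≤ i / m ↔ ⌈m * x⌉₊ ≤ i := by
    rw [Nat.ceil_le, le_div_iff₀ hm', mul_comm]
  simp only [stepApprox, Pi.sub_apply, Pi.smul_apply, Finset.sum_apply, indicator_apply, mem_Iic,
    hx.2, hle, Pi.one_apply, smul_eq_mul, mul_ite, mul_one, mul_zero, if_true]
  rw [← Finset.sum_filter, Finset.range_eq_Ico, Finset.Ico_filter_le, Nat.zero_max]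
  have := Finset.sum_Ico_sub (fun i : ℕ => g (i / m)) hceil
  push_cast at this
  rw [this, div_self hm'.ne']
  ring

theorem exists_abs_sub_stepApprox_le {g : ℝ → ℝ} (hg : ContinuousOn g (Icc 0 1)) {ε : ℝ}
    (hε : 0 < ε) : ∃ m : ℕ, ∀ y ∈ Icc (0 : ℝ) 1, |g y - stepApprox g m y| ≤ ε := by
  obtain ⟨δ, hδ, hgδ⟩ := Metric.uniformContinuousOn_iff_le.mp
    (isCompact_Icc.uniformContinuousOn_of_continuous hg) ε hε
  obtain ⟨m, hm⟩ := exists_nat_one_div_lt hδ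
  refine ⟨m + 1, fun y hy => ?_⟩
  rw [stepApprox_apply g m.succ_pos hy]
  have hm' : (0 : ℝ) < (m + 1 : ℕ) := by positivity
  have hceil := Nat.ceil_lt_add_one (mul_nonneg hm'.le hy.1)
  have hlow : y ≤ ⌈(m + 1 : ℕ) * y⌉₊ / ((m + 1 : ℕ) : ℝ) := by
    rw [le_div_iff₀ hm', mul_comm]; exact Nat.le_ceil _
  have hup : ⌈(m + 1 : ℕ) * y⌉₊ / ((m + 1 : ℕ) : ℝ) ≤ 1 := by
    rw [div_le_one hm']
    exact_mod_cast Nat.ceil_le.mpr (by nlinarith [hy.2])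
  have hclose : ⌈(m + 1 : ℕ) * y⌉₊ / ((m + 1 : ℕ) : ℝ) - y < 1 / (m + 1 : ℕ) := by
    rw [div_sub' hm'.ne', div_lt_div_iff_of_pos_right hm']
    linarith
  refine hgδ y hy _ ⟨hy.1.trans hlow, hup⟩ ?_
  rw [Real.dist_eq, abs_sub_comm, abs_of_nonneg (sub_nonneg.mpr hlow)]
  push_cast at hclose ⊢
  linarith

theorem integral_indicator_Iic_one {b t : ℝ} (hb : 0 ≤ b) (ht : 0 ≤ t) :
    ∫ y in 0..t, (Iic b).indicator (1 : ℝ → ℝ) y = min t b := by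
  rcases le_total b t with hbt | htb
  · rw [min_eq_right hbt]
    exact (intervalIntegral.integral_indicator (f := 1) (μ := volume) ⟨hb, hbt⟩).trans (by simp)
  · rw [min_eq_left htb, intervalIntegral.integral_congr (g := fun _ => 1)]
    · simp
    · intro y hy
      rw [uIcc_of_le ht] at hy
      simp [hy.2.trans htb]

theorem intervalIntegrable_indicator_Iic_one (b t : ℝ) :
    IntervalIntegrable ((Iic b).indicator (1 : ℝ → ℝ)) volume 0 t :=
  Antitone.intervalIntegrable fun y z hyz => by
    by_cases hz : z ≤ b
    · simp [hz, hyz.trans hz]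
    · by_cases hy : y ≤ b <;> simp [hz, hy]

theorem intervalIntegrable_stepApprox (g : ℝ → ℝ) (m : ℕ) (t : ℝ) :
    IntervalIntegrable (stepApprox g m) volume 0 t :=
  ((intervalIntegrable_indicator_Iic_one 1 t).smul _).sub
    (IntervalIntegrable.sum _ fun _ _ => (intervalIntegrable_indicator_Iic_one _ t).smul _)

theorem integral_stepApprox (g : ℝ → ℝ) (m : ℕ) {t : ℝ} (ht : 0 ≤ t) :
    ∫ y in 0..t, stepApprox g m y =
      g 1 * min t 1 - ∑ i ∈ Finset.range m, (g ((i + 1) / m) - g (i / m)) * min t (i / m) := by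
  have hint (b : ℝ) := intervalIntegrable_indicator_Iic_one b t
  simp only [stepApprox, Pi.sub_apply, Pi.smul_apply, Finset.sum_apply, smul_eq_mul]
  have hsum : IntervalIntegrable (fun y => ∑ i ∈ Finset.range m,
      (g ((i + 1) / m) - g (i / m)) * (Iic ((i : ℝ) / m)).indicator 1 y) volume 0 t := by
    simpa only [Finset.sum_fn] using IntervalIntegrable.sum (Finset.range m) fun i _ =>
      (hint ((i : ℝ) / m)).const_mul (g ((i + 1) / m) - g (i / m))
  rw [intervalIntegral.integral_sub ((hint 1).const_mul _) hsum,
    intervalIntegral.integral_finsetSum fun i _ => (hint _).const_mul _]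
  simp only [intervalIntegral.integral_const_mul,
    integral_indicator_Iic_one zero_le_one ht]
  congr 1
  exact Finset.sum_congr rfl fun i _ => by rw [integral_indicator_Iic_one (by positivity) ht]

section

variable {α : Type*} {p : Filter α} {s : α → Finset ι} {x w : α → ι → ℝ}

theorem tendstoUniformlyOn_discreteIntegral_indicator_Iic
    (hF : TendstoUniformlyOn (fun a => discreteIntegral (s a) (x a) (w a) 1) id p (Icc 0 1))
    {b : ℝ} (hb : 0 ≤ b) :
    TendstoUniformlyOn (fun a => discreteIntegral (s a) (x a) (w a) ((Iic b).indicator 1))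
      (fun t => min t b) p (Icc 0 1) := by
  have key (a : α) : discreteIntegral (s a) (x a) (w a) ((Iic b).indicator 1) =
      discreteIntegral (s a) (x a) (w a) 1 ∘ fun t => min t b :=
    funext (discreteIntegral_indicator_Iic _ _ _ b)
  simp_rw [key]
  exact (hF.comp _).mono fun t ht => ⟨le_min ht.1 hb, (min_le_left t b).trans ht.2⟩

theorem tendstoUniformlyOn_discreteIntegral_stepApprox
    (hF : TendstoUniformlyOn (fun a => discreteIntegral (s a) (x a) (w a) 1) id p (Icc 0 1))
    (g : ℝ → ℝ) (m : ℕ) :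
    TendstoUniformlyOn (fun a => discreteIntegral (s a) (x a) (w a) (stepApprox g m))
      (fun t => ∫ y in 0..t, stepApprox g m y) p (Icc 0 1) := by
  have hsum : TendstoUniformlyOn
      (fun a => ∑ i ∈ Finset.range m, (g ((i + 1) / m) - g (i / m)) •
        discreteIntegral (s a) (x a) (w a) ((Iic ((i : ℝ) / m)).indicator 1))
      (∑ i ∈ Finset.range m, (g ((i + 1) / m) - g (i / m)) • fun t => min t ((i : ℝ) / m))
      p (Icc 0 1) :=
    tendstoUniformlyOn_finsetSum _ fun i _ =>
      (tendstoUniformlyOn_discreteIntegral_indicator_Iic hF (by positivity)).const_smul _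
  refine TendstoUniformlyOn.congr_right ?_ fun t ht => (integral_stepApprox g m ht.1).symm
  simp only [stepApprox, map_sub, map_smul, map_sum]
  exact (((tendstoUniformlyOn_discreteIntegral_indicator_Iic hF zero_le_one).const_smul (g 1)).sub
    hsum).congr_right fun t _ => by simp [Finset.sum_apply]

theorem tendstoUniformlyOn_discreteIntegral_of_approx (hw : ∀ a, ∀ k ∈ s a, 0 ≤ w a k)
    (hF : TendstoUniformlyOn (fun a => discreteIntegral (s a) (x a) (w a) 1) id p (Icc 0 1))
    {g G : ℝ → ℝ}
    (happrox : ∀ ε > 0, ∃ ψ Ψ : ℝ → ℝ,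
      TendstoUniformlyOn (fun a => discreteIntegral (s a) (x a) (w a) ψ) Ψ p (Icc 0 1) ∧
      (∀ y ∈ Icc 0 1, |g y - ψ y| ≤ ε) ∧ ∀ t ∈ Icc 0 1, |G t - Ψ t| ≤ ε) :
    TendstoUniformlyOn (fun a => discreteIntegral (s a) (x a) (w a) g) G p (Icc 0 1) := by
  rw [Metric.tendstoUniformlyOn_iff] at hF ⊢
  intro ε hε
  obtain ⟨ψ, Ψ, hψ, hgψ, hGΨ⟩ := happrox (ε / 5) (by positivity)
  filter_upwards [hF 1 one_pos, Metric.tendstoUniformlyOn_iff.mp hψ (ε / 5) (by positivity)]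
    with a hFa hψa t ht
  have hmass : discreteIntegral (s a) (x a) (w a) 1 t ≤ 2 := by
    have := hFa t ht
    rw [Real.dist_eq, abs_sub_lt_iff, id] at this
    linarith [ht.2]
  have hgψa := abs_discreteIntegral_le (s a) (x a) (w a) (hw a) (φ := g - ψ)
    fun y hy => hgψ y ⟨hy.1, hy.2.trans ht.2⟩
  rw [map_sub, Pi.sub_apply] at hgψa
  have hmass' : ε / 5 * discreteIntegral (s a) (x a) (w a) 1 t ≤ 2 * (ε / 5) := by
    nlinarith
  have h1 := abs_le.mp (hGΨ t ht)
  have h2 := abs_lt.mp (Real.dist_eq _ _ ▸ hψa t ht)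
  have h3 := abs_le.mp hgψa
  rw [Real.dist_eq, abs_lt]
  constructor <;> linarith

theorem tendstoUniformlyOn_discreteIntegral_integral (hw : ∀ a, ∀ k ∈ s a, 0 ≤ w a k)
    (hF : TendstoUniformlyOn (fun a => discreteIntegral (s a) (x a) (w a) 1) id p (Icc 0 1))
    {g : ℝ → ℝ} (hg : ContinuousOn g (Icc 0 1)) :
    TendstoUniformlyOn (fun a => discreteIntegral (s a) (x a) (w a) g)
      (fun t => ∫ y in 0..t, g y) p (Icc 0 1) := by
  refine tendstoUniformlyOn_discreteIntegral_of_approx hw hF fun ε hε => ?_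
  obtain ⟨m, hm⟩ := exists_abs_sub_stepApprox_le hg hε
  refine ⟨stepApprox g m, _, tendstoUniformlyOn_discreteIntegral_stepApprox hF g m, hm,
    fun t ht => ?_⟩
  have hgt : IntervalIntegrable g volume 0 t :=
    (hg.mono (Icc_subset_Icc_right ht.2)).intervalIntegrable_of_Icc ht.1
  rw [← intervalIntegral.integral_sub hgt (intervalIntegrable_stepApprox g m t)]
  calc |∫ y in 0..t, g y - stepApprox g m y|
      ≤ ε * |t - 0| := by
        rw [← Real.norm_eq_abs]
        refine intervalIntegral.norm_integral_le_of_norm_le_const fun y hy => ?_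
        rw [uIoc_of_le ht.1] at hy
        exact (Real.norm_eq_abs _).trans_le (hm y ⟨hy.1.le, hy.2.trans ht.2⟩)
    _ ≤ ε := by rw [sub_zero, abs_of_nonneg ht.1]; nlinarith [ht.2]

end

theorem stmt_2_general (g h : ℝ → ℝ) (hg : ContinuousOn g (Set.Icc 0 1)) (H : ℝ)
    (hyp : TendstoUniformlyOn
      (fun (n : ℕ) (t : ℝ) => (n : ℝ) ^ (2 * H - 1) *
        ∑ k ∈ Finset.range n, (Set.Icc (0 : ℝ) t).indicator (fun _ => (1 : ℝ)) ((k : ℝ) / n) *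
          (h (((k : ℝ) + 1) / n) - h ((k : ℝ) / n)) ^ 2)
      (fun t => t) atTop (Set.Icc 0 1)) :
    TendstoUniformlyOn
      (fun (n : ℕ) (t : ℝ) => (n : ℝ) ^ (2 * H - 1) *
        ∑ k ∈ Finset.range n, g ((k : ℝ) / n) *
          (Set.Icc (0 : ℝ) t).indicator (fun _ => (1 : ℝ)) ((k : ℝ) / n) *
          (h (((k : ℝ) + 1) / n) - h ((k : ℝ) / n)) ^ 2)
      (fun t => ∫ s in (0 : ℝ)..t, g s) atTop (Set.Icc 0 1) := by
  have hw (n : ℕ) (k : ℕ) (_ : k ∈ Finset.range n) :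
      0 ≤ (n : ℝ) ^ (2 * H - 1) * (h ((k + 1) / n) - h (k / n)) ^ 2 := by
    positivity
  convert tendstoUniformlyOn_discreteIntegral_integral hw ?_ hg using 1
  · ext n t
    exact mul_sum_mul_indicator_eq_discreteIntegral _ _ _ _ _ _
  · convert hyp using 1
    · ext n t
      simpa using (mul_sum_mul_indicator_eq_discreteIntegral _ _ _ _ 1 t).symm
    · rfl

theorem stmt_2 (g h : ℝ → ℝ) (hg : ContinuousOn g (Set.Icc 0 1))
    (hh : ContinuousOn h (Set.Icc 0 1)) (H : ℝ) (hH : H ∈ Set.Ioo (0 : ℝ) 1)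
    (hyp : TendstoUniformlyOn
      (fun (n : ℕ) (t : ℝ) => (n : ℝ) ^ (2 * H - 1) *
        ∑ k ∈ Finset.range n, (Set.Icc (0 : ℝ) t).indicator (fun _ => (1 : ℝ)) ((k : ℝ) / n) *
          (h (((k : ℝ) + 1) / n) - h ((k : ℝ) / n)) ^ 2)
      (fun t => t) atTop (Set.Icc 0 1)) :
    TendstoUniformlyOn
      (fun (n : ℕ) (t : ℝ) => (n : ℝ) ^ (2 * H - 1) *
        ∑ k ∈ Finset.range n, g ((k : ℝ) / n) *
          (Set.Icc (0 : ℝ) t).indicator (fun _ => (1 : ℝ)) ((k : ℝ) / n) *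
          (h (((k : ℝ) + 1) / n) - h ((k : ℝ) / n)) ^ 2)
      (fun t => ∫ s in (0 : ℝ)..t, g s) atTop (Set.Icc 0 1) :=
  stmt_2_general g h hg H hyp
end

section
/- Let σ ∈ C¹_b(ℝ) and φ the flow of y' = σ(y). Then ∂φ/∂x₂(x₁,x₂) = σ(x₁) · ∂φ/∂x₁(x₁,x₂) for all x₁, x₂ ∈ ℝ. -/
/-!
Since `σ'` is bounded, `σ` is Lipschitz, so solutions of `y' = σ(y)` are unique and `φ` is a flow:
`φ x (s + t) = φ (φ x s) t`, and `φ x` is constant when `σ x = 0`, which makes both sides vanish.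
If `σ x ≠ 0`, then `t ↦ φ x t` has nonzero derivative `σ x` at `0`, so it has a local inverse `τ`
near `x` with `τ' (x) = 1 / σ x`. For `y` near `x` the flow property gives
`φ y t = φ x (t + τ y)`, and differentiating in `y` yields `∂ₓφ (x, t) = σ (φ x t) / σ x`.
-/

open Set Filter Topology
open scoped NNReal

lemma lipschitzWith_of_abs_deriv_le {f : ℝ → ℝ} (hf : Differentiable ℝ f) {C : ℝ}
    (hC : ∀ x, |deriv f x| ≤ C) : LipschitzWith (Real.toNNReal C) f :=
  lipschitzWith_of_nnnorm_deriv_le hf fun x => by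
    rw [← NNReal.coe_le_coe, coe_nnnorm, Real.norm_eq_abs]
    exact (hC x).trans (Real.le_coe_toNNReal C)

section Flow

variable {σ : ℝ → ℝ} {φ : ℝ → ℝ → ℝ} {K : ℝ≥0}

lemma flow_add (hK : LipschitzWith K σ) (hφ0 : ∀ x, φ x 0 = x)
    (hφ : ∀ x t, HasDerivAt (φ x) (σ (φ x t)) t) (x s t : ℝ) :
    φ x (s + t) = φ (φ x s) t := by
  have hshift : ∀ u, HasDerivAt (fun u => φ x (s + u)) (σ (φ x (s + u))) u := fun u =>
    (hφ x (s + u)).comp_const_add s u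
  have := ODE_solution_unique_univ (v := fun _ => σ) (s := fun _ => univ) (t₀ := 0)
    (fun _ => hK.lipschitzOnWith) (fun u => ⟨hshift u, trivial⟩)
    (fun u => ⟨hφ (φ x s) u, trivial⟩) (by simp [hφ0])
  exact congrFun this t

lemma flow_eq_self_of_eq_zero (hK : LipschitzWith K σ) (hφ0 : ∀ x, φ x 0 = x)
    (hφ : ∀ x t, HasDerivAt (φ x) (σ (φ x t)) t) {x : ℝ} (hx : σ x = 0) (t : ℝ) :
    φ x t = x := by
  have hconst : ∀ u : ℝ, HasDerivAt (fun _ : ℝ => x) (σ x) u := fun u => by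
    rw [hx]; exact hasDerivAt_const u x
  have := ODE_solution_unique_univ (v := fun _ => σ) (s := fun _ => univ) (t₀ := 0)
    (g := fun _ => x) (fun _ => hK.lipschitzOnWith) (fun u => ⟨hφ x u, trivial⟩)
    (fun u => ⟨hconst u, trivial⟩) (hφ0 x)
  exact congrFun this t

lemma hasStrictDerivAt_flow_zero (hσ : Continuous σ) (hφ0 : ∀ x, φ x 0 = x)
    (hφ : ∀ x t, HasDerivAt (φ x) (σ (φ x t)) t) (x : ℝ) :
    HasStrictDerivAt (φ x) (σ x) 0 := by
  have hφc : Continuous (φ x) := continuous_iff_continuousAt.2 fun t => (hφ x t).continuousAt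
  have : HasStrictDerivAt (φ x) (σ (φ x 0)) 0 :=
    hasStrictDerivAt_of_hasDerivAt_of_continuousAt (.of_forall (hφ x))
      (hσ.comp hφc).continuousAt
  rwa [hφ0] at this

lemma hasDerivAt_flow_initial (hK : LipschitzWith K σ) (hφ0 : ∀ x, φ x 0 = x)
    (hφ : ∀ x t, HasDerivAt (φ x) (σ (φ x t)) t) {x : ℝ} (hx : σ x ≠ 0) (t : ℝ) :
    HasDerivAt (fun y => φ y t) (σ (φ x t) / σ x) x := by
  have hs := hasStrictDerivAt_flow_zero hK.continuous hφ0 hφ x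
  set τ := hs.localInverse (φ x) (σ x) 0 hx
  have hτ_inv : ∀ᶠ y in 𝓝 x, φ x (τ y) = y := by
    simpa only [hφ0] using (hs.hasStrictFDerivAt_equiv hx).eventually_right_inverse
  have hτx : τ x = 0 := by
    simpa only [hφ0] using (hs.hasStrictFDerivAt_equiv hx).localInverse_apply_image
  have hτ' : HasDerivAt τ (σ x)⁻¹ x := by
    simpa only [hφ0] using (hs.to_localInverse (hf' := hx)).hasDerivAt
  have hlocal : (fun y => φ x (t + τ y)) =ᶠ[𝓝 x] fun y => φ y t := by
    filter_upwards [hτ_inv] with y hy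
    rw [add_comm, flow_add hK hφ0 hφ, hy]
  have hcomp : HasDerivAt (fun y => φ x (t + τ y)) (σ (φ x t) * (σ x)⁻¹) x := by
    have := (hφ x (t + τ x)).comp x (hτ'.const_add t)
    simpa only [hτx, add_zero, Function.comp_def] using this
  exact (hcomp.congr_of_eventuallyEq hlocal.symm).congr_deriv (div_eq_mul_inv _ _).symm

lemma deriv_flow_eq_mul_deriv_flow_initial (hK : LipschitzWith K σ) (hφ0 : ∀ x, φ x 0 = x)
    (hφ : ∀ x t, HasDerivAt (φ x) (σ (φ x t)) t) (x t : ℝ) :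
    deriv (φ x) t = σ x * deriv (fun y => φ y t) x := by
  rw [(hφ x t).deriv]
  by_cases hx : σ x = 0
  · rw [flow_eq_self_of_eq_zero hK hφ0 hφ hx, hx, zero_mul]
  · rw [(hasDerivAt_flow_initial hK hφ0 hφ hx t).deriv, mul_div_cancel₀ _ hx]

end Flow

theorem stmt_11 (σ : ℝ → ℝ) (hσ : ContDiff ℝ 1 σ)
    (hσb : ∃ C : ℝ, ∀ x, |σ x| ≤ C ∧ |deriv σ x| ≤ C)
    (φ : ℝ → ℝ → ℝ)
    (hφ0 : ∀ x₁ : ℝ, φ x₁ 0 = x₁)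
    (hφ : ∀ x₁ x₂ : ℝ, HasDerivAt (φ x₁) (σ (φ x₁ x₂)) x₂) :
    ∀ x₁ x₂ : ℝ, deriv (φ x₁) x₂ = σ x₁ * deriv (fun x => φ x x₂) x₁ := by
  obtain ⟨C, hC⟩ := hσb
  have hK := lipschitzWith_of_abs_deriv_le (hσ.differentiable one_ne_zero) fun x => (hC x).2
  exact deriv_flow_eq_mul_deriv_flow_initial hK hφ0 hφ
end

section
/- Let σ ∈ C²_b(ℝ) and φ the flow of y' = σ(y). Then for all x₁, x₂ ∈ ℝ: σ²(x₁)·∂²φ/∂x₁²(x₁,−x₂) − 2σ(x₁)·∂²φ/∂x₁∂x₂(x₁,−x₂) + σ(x₁)σ'(x₁)·∂φ/∂x₁(x₁,−x₂) + ∂²φ/∂x₂²(x₁,−x₂) = 0. -/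
/-!
Where `σ x ≠ 0`, the time map `t ↦ φ x t` has a local inverse `τ` near `x`, and the group law
`φ (φ x s) t = φ x (s + t)` gives `φ w t = φ x (τ w + t)` for `w` near `x`. Hence
`∂ₓφ(x, t) = σ(φ(x, t)) / σ(x)` and `∂ₜφ(x, t) = σ(φ(x, t))`, and the identity, which is
`(σ ∂ₓ - ∂ₜ)² φ = 0` expanded, becomes an algebraic identity in `σ(x), σ'(x), σ(φ), σ'(φ)`.
Where `σ x = 0` the orbit of `x` is stationary and every term vanishes.
-/

open Filter Topology Set

lemma eq_of_hasDerivAt_of_locallyLipschitz {σ : ℝ → ℝ} (hσ : LocallyLipschitz σ)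
    {f g : ℝ → ℝ} (hf : ∀ t, HasDerivAt f (σ (f t)) t) (hg : ∀ t, HasDerivAt g (σ (g t)) t)
    {t₀ : ℝ} (heq : f t₀ = g t₀) : f = g := by
  have hopen : IsOpen {t | f t = g t} := isOpen_iff_mem_nhds.2 fun t (ht : f t = g t) => by
    obtain ⟨K, U, hU, hK⟩ := hσ (f t)
    have hfU : ∀ᶠ s in 𝓝 t, f s ∈ U := (hf t).continuousAt.preimage_mem_nhds hU
    have hgU : ∀ᶠ s in 𝓝 t, g s ∈ U := (hg t).continuousAt.preimage_mem_nhds (ht ▸ hU)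
    exact ODE_solution_unique_of_eventually (v := fun _ => σ) (s := fun _ => U)
      (.of_forall fun _ => hK) ((Eventually.of_forall hf).and hfU)
      ((Eventually.of_forall hg).and hgU) ht
  have hclosed : IsClosed {t | f t = g t} :=
    isClosed_eq (continuous_iff_continuousAt.2 fun t => (hf t).continuousAt)
      (continuous_iff_continuousAt.2 fun t => (hg t).continuousAt)
  have huniv := IsClopen.eq_univ ⟨hclosed, hopen⟩ ⟨t₀, heq⟩
  exact funext (eq_univ_iff_forall.1 huniv)

structure IsFlow (σ : ℝ → ℝ) (φ : ℝ → ℝ → ℝ) : Prop where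
  map_zero : ∀ x, φ x 0 = x
  hasDerivAt : ∀ x t, HasDerivAt (φ x) (σ (φ x t)) t

namespace IsFlow

variable {σ : ℝ → ℝ} {φ : ℝ → ℝ → ℝ}

lemma add (h : IsFlow σ φ) (hσ : LocallyLipschitz σ) (x s t : ℝ) :
    φ (φ x s) t = φ x (s + t) := by
  have hshift : ∀ t, HasDerivAt (fun t => φ x (s + t)) (σ (φ x (s + t))) t := fun t => by
    simpa [Function.comp_def] using
      (h.hasDerivAt x (s + t)).comp t ((hasDerivAt_id t).const_add s)
  exact congrFun (eq_of_hasDerivAt_of_locallyLipschitz hσ (h.hasDerivAt _) hshift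
    (t₀ := 0) (by simp [h.map_zero])) t

lemma apply_eq_self (h : IsFlow σ φ) (hσ : LocallyLipschitz σ) {x : ℝ} (hx : σ x = 0)
    (t : ℝ) : φ x t = x :=
  congrFun (eq_of_hasDerivAt_of_locallyLipschitz hσ (h.hasDerivAt x)
    (fun t => hx ▸ hasDerivAt_const t x) (h.map_zero x)) t

lemma deriv_eq (h : IsFlow σ φ) (x : ℝ) : deriv (φ x) = fun t => σ (φ x t) :=
  funext fun t => (h.hasDerivAt x t).deriv

lemma hasStrictDerivAt (h : IsFlow σ φ) (hσ : Continuous σ) (x t : ℝ) :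
    HasStrictDerivAt (φ x) (σ (φ x t)) t := by
  have hdiff : Differentiable ℝ (φ x) := fun t => (h.hasDerivAt x t).differentiableAt
  have hC1 : ContDiff ℝ 1 (φ x) := by
    rw [contDiff_one_iff_deriv, h.deriv_eq]
    exact ⟨hdiff, hσ.comp hdiff.continuous⟩
  exact hC1.contDiffAt.hasStrictDerivAt' (h.hasDerivAt x t) one_ne_zero

lemma hasDerivAt_left (h : IsFlow σ φ) (hσ : ContDiff ℝ 1 σ) {x : ℝ} (hx : σ x ≠ 0)
    (t : ℝ) : HasDerivAt (fun w => φ w t) (σ (φ x t) / σ x) x := by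
  have hs : HasStrictDerivAt (φ x) (σ x) 0 := by
    simpa [h.map_zero] using h.hasStrictDerivAt hσ.continuous x 0
  set τ := hs.localInverse (φ x) (σ x) 0 hx
  have hright : ∀ᶠ w in 𝓝 x, φ x (τ w) = w := by
    simpa [h.map_zero] using hs.eventually_right_inverse hx
  have hτx : τ x = 0 := by
    simpa [h.map_zero] using (hs.eventually_left_inverse hx).self_of_nhds
  have hτ : HasDerivAt τ (σ x)⁻¹ x := by
    simpa [h.map_zero] using (hs.to_localInverse hx).hasDerivAt
  have hcomp : HasDerivAt (fun w => φ x (τ w + t)) (σ (φ x t) / σ x) x := by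
    simpa [hτx, div_eq_mul_inv, Function.comp_def] using
      (h.hasDerivAt x (τ x + t)).comp x (hτ.add_const t)
  refine hcomp.congr_of_eventuallyEq ?_
  filter_upwards [hright] with w hw
  rw [← h.add hσ.locallyLipschitz, hw]

lemma deriv_deriv_right (h : IsFlow σ φ) (hσ : Differentiable ℝ σ) (x t : ℝ) :
    deriv (deriv (φ x)) t = deriv σ (φ x t) * σ (φ x t) := by
  rw [h.deriv_eq]
  exact ((hσ _).hasDerivAt.comp t (h.hasDerivAt x t)).deriv

lemma deriv_right_deriv_left (h : IsFlow σ φ) (hσ : ContDiff ℝ 1 σ) {x : ℝ} (hx : σ x ≠ 0)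
    (t : ℝ) :
    deriv (fun s => deriv (fun w => φ w s) x) t = deriv σ (φ x t) * σ (φ x t) / σ x := by
  have hleft : (fun s => deriv (fun w => φ w s) x) = fun s => σ (φ x s) / σ x :=
    funext fun s => (h.hasDerivAt_left hσ hx s).deriv
  rw [hleft]
  exact ((((hσ.differentiable one_ne_zero) _).hasDerivAt.comp t (h.hasDerivAt x t)).div_const
    _).deriv

lemma deriv_deriv_left (h : IsFlow σ φ) (hσ : ContDiff ℝ 1 σ) {x : ℝ} (hx : σ x ≠ 0)
    (t : ℝ) :
    deriv (fun v => deriv (fun w => φ w t) v) x =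
      σ (φ x t) * (deriv σ (φ x t) - deriv σ x) / σ x ^ 2 := by
  have hσd := hσ.differentiable one_ne_zero
  have hleft : (fun v => deriv (fun w => φ w t) v) =ᶠ[𝓝 x] fun v => σ (φ v t) / σ v :=
    (hσ.continuous.continuousAt.eventually_ne hx).mono fun v hv =>
      (h.hasDerivAt_left hσ hv t).deriv
  have hquot : HasDerivAt (fun v => σ (φ v t) / σ v)
      ((deriv σ (φ x t) * (σ (φ x t) / σ x) * σ x - σ (φ x t) * deriv σ x) / σ x ^ 2) x :=
    ((hσd _).hasDerivAt.comp x (h.hasDerivAt_left hσ hx t)).div (hσd x).hasDerivAt hx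
  rw [hleft.deriv_eq, hquot.deriv]
  field_simp

theorem second_order_identity (h : IsFlow σ φ) (hσ : ContDiff ℝ 1 σ) (x t : ℝ) :
    σ x ^ 2 * deriv (fun v => deriv (fun w => φ w t) v) x
      - 2 * σ x * deriv (fun s => deriv (fun w => φ w s) x) t
      + σ x * deriv σ x * deriv (fun w => φ w t) x
      + deriv (deriv (φ x)) t = 0 := by
  rw [h.deriv_deriv_right (hσ.differentiable one_ne_zero)]
  rcases eq_or_ne (σ x) 0 with hx | hx
  · rw [h.apply_eq_self hσ.locallyLipschitz hx, hx]
    ring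
  · rw [h.deriv_deriv_left hσ hx, h.deriv_right_deriv_left hσ hx,
      (h.hasDerivAt_left hσ hx t).deriv]
    field_simp
    ring

end IsFlow

theorem stmt_13_general (σ : ℝ → ℝ) (hσ : ContDiff ℝ 2 σ)
    (φ : ℝ → ℝ → ℝ)
    (hφ0 : ∀ x₁ : ℝ, φ x₁ 0 = x₁)
    (hφ : ∀ x₁ x₂ : ℝ, HasDerivAt (φ x₁) (σ (φ x₁ x₂)) x₂) :
    ∀ x₁ x₂ : ℝ,
      σ x₁ ^ 2 * deriv (fun x => deriv (fun x' => φ x' (-x₂)) x) x₁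
        - 2 * σ x₁ * deriv (fun y => deriv (fun x => φ x y) x₁) (-x₂)
        + σ x₁ * deriv σ x₁ * deriv (fun x => φ x (-x₂)) x₁
        + deriv (deriv (φ x₁)) (-x₂) = 0 :=
  fun x₁ x₂ => (IsFlow.mk hφ0 hφ).second_order_identity (hσ.of_le one_le_two) x₁ (-x₂)

theorem stmt_13 (σ : ℝ → ℝ) (hσ : ContDiff ℝ 2 σ)
    (hσb : ∃ C : ℝ, ∀ x, |σ x| ≤ C ∧ |deriv σ x| ≤ C ∧ |deriv (deriv σ) x| ≤ C)
    (φ : ℝ → ℝ → ℝ)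
    (hφ0 : ∀ x₁ : ℝ, φ x₁ 0 = x₁)
    (hφ : ∀ x₁ x₂ : ℝ, HasDerivAt (φ x₁) (σ (φ x₁ x₂)) x₂) :
    ∀ x₁ x₂ : ℝ,
      σ x₁ ^ 2 * deriv (fun x => deriv (fun x' => φ x' (-x₂)) x) x₁
        - 2 * σ x₁ * deriv (fun y => deriv (fun x => φ x y) x₁) (-x₂)
        + σ x₁ * deriv σ x₁ * deriv (fun x => φ x (-x₂)) x₁
        + deriv (deriv (φ x₁)) (-x₂) = 0 :=
  stmt_13_general σ hσ φ hφ0 hφ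
end

section
/- Let (a_j)_{j=0}^{n−1} be real numbers and consider P_{i,k} = ∏_{j=i+1}^{k−1}(1 + a_j) and E_{i,k} = exp(∑_{j=i}^{k−1} a_j). If |a_j| ≤ c/n for all j with a constant c > 0, then sup_{0 ≤ i < k ≤ n} |P_{i,k} − E_{i,k}| ≤ C(c)/n for a constant C(c) depending only on c. -/
/-!
Replace the factors `1 + a j` one at a time by `exp (a j)`: each swap costs
`|exp x - 1 - x| ≤ x ^ 2 * exp |x| = O(1/n²)` times a bound `exp c` for the remaining factors,
so the at most `n` swaps cost `O(1/n)`. The leftover factor `exp (a i)` of the exponential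
(whose sum starts one index earlier) differs from `1` by `O(1/n)` as well.
-/

open Finset

theorem norm_prod_sub_prod_le {ι R : Type*} [NormedCommRing R] [NormOneClass R]
    (s : Finset ι) {f g : ι → R} {b : ι → ℝ} (hb : ∀ j ∈ s, 1 ≤ b j)
    (hf : ∀ j ∈ s, ‖f j‖ ≤ b j) (hg : ∀ j ∈ s, ‖g j‖ ≤ b j) :
    ‖∏ j ∈ s, f j - ∏ j ∈ s, g j‖ ≤ (∑ j ∈ s, ‖f j - g j‖) * ∏ j ∈ s, b j := by
  classical
  induction s using Finset.induction_on with
  | empty => simp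
  | @insert i s hi ih =>
    simp only [forall_mem_insert] at hb hf hg
    have hbs : 0 ≤ ∏ j ∈ s, b j := zero_le_one.trans (one_le_prod hb.2)
    have hgs : ‖∏ j ∈ s, g j‖ ≤ ∏ j ∈ s, b j :=
      (norm_prod_le s g).trans (prod_le_prod (fun _ _ ↦ norm_nonneg _) hg.2)
    rw [prod_insert hi, prod_insert hi, prod_insert hi, sum_insert hi]
    calc ‖f i * ∏ j ∈ s, f j - g i * ∏ j ∈ s, g j‖
        = ‖f i * (∏ j ∈ s, f j - ∏ j ∈ s, g j) + (f i - g i) * ∏ j ∈ s, g j‖ := by ring_nf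
      _ ≤ ‖f i‖ * ‖∏ j ∈ s, f j - ∏ j ∈ s, g j‖ + ‖f i - g i‖ * ‖∏ j ∈ s, g j‖ :=
        (norm_add_le _ _).trans (add_le_add (norm_mul_le _ _) (norm_mul_le _ _))
      _ ≤ b i * ((∑ j ∈ s, ‖f j - g j‖) * ∏ j ∈ s, b j) + ‖f i - g i‖ * ∏ j ∈ s, b j :=
        add_le_add (mul_le_mul hf.1 (ih hb.2 hf.2 hg.2) (norm_nonneg _) (by linarith [hb.1]))
          (mul_le_mul_of_nonneg_left hgs (norm_nonneg _))
      _ ≤ (‖f i - g i‖ + ∑ j ∈ s, ‖f j - g j‖) * (b i * ∏ j ∈ s, b j) := by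
        nlinarith [mul_nonneg (mul_nonneg (norm_nonneg (f i - g i)) hbs) (sub_nonneg.2 hb.1)]

namespace Real

theorem abs_exp_sub_one_le_mul_exp_abs (x : ℝ) : |exp x - 1| ≤ |x| * exp |x| := by
  simpa [← Complex.ofReal_exp, ← Complex.ofReal_one, ← Complex.ofReal_sub]
    using Complex.norm_exp_sub_sum_le_norm_mul_exp x 1

theorem abs_exp_sub_one_sub_id_le_sq_mul_exp_abs (x : ℝ) :
    |exp x - 1 - x| ≤ x ^ 2 * exp |x| := by
  have := Complex.norm_exp_sub_sum_le_norm_mul_exp x 2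
  norm_num [sum_range_succ] at this
  rw [sub_sub]
  exact_mod_cast this

theorem abs_one_add_le_exp_abs (x : ℝ) : |1 + x| ≤ exp |x| :=
  (abs_add_le 1 x).trans (by simpa [add_comm] using add_one_le_exp |x|)

theorem abs_prod_one_add_sub_exp_sum_le {ι : Type*} (s : Finset ι) (a : ι → ℝ) :
    |∏ j ∈ s, (1 + a j) - exp (∑ j ∈ s, a j)| ≤
      (∑ j ∈ s, a j ^ 2 * exp |a j|) * exp (∑ j ∈ s, |a j|) := by
  rw [exp_sum, exp_sum]
  calc |∏ j ∈ s, (1 + a j) - ∏ j ∈ s, exp (a j)|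
      ≤ (∑ j ∈ s, |1 + a j - exp (a j)|) * ∏ j ∈ s, exp |a j| :=
        norm_prod_sub_prod_le s (f := fun j ↦ 1 + a j) (g := fun j ↦ exp (a j))
          (fun j _ ↦ one_le_exp (abs_nonneg _))
          (fun j _ ↦ abs_one_add_le_exp_abs (a j))
          (fun j _ ↦ by rw [norm_eq_abs, abs_exp]; exact exp_le_exp.2 (le_abs_self _))
    _ ≤ (∑ j ∈ s, a j ^ 2 * exp |a j|) * ∏ j ∈ s, exp |a j| := by
        gcongr with j
        rw [abs_sub_comm, sub_add_eq_sub_sub]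
        exact abs_exp_sub_one_sub_id_le_sq_mul_exp_abs _

theorem abs_prod_one_add_sub_exp_sum_le_of_abs_le {ι : Type*} {s : Finset ι} {a : ι → ℝ}
    {δ : ℝ} (ha : ∀ j ∈ s, |a j| ≤ δ) :
    |∏ j ∈ s, (1 + a j) - exp (∑ j ∈ s, a j)| ≤ #s * δ ^ 2 * exp ((#s + 1) * δ) := by
  have hsq : ∑ j ∈ s, a j ^ 2 * exp |a j| ≤ #s * (δ ^ 2 * exp δ) := by
    rw [← nsmul_eq_mul]
    refine sum_le_card_nsmul _ _ _ fun j hj ↦ ?_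
    rw [← sq_abs]
    gcongr
    exacts [ha j hj, ha j hj]
  have hsum : ∑ j ∈ s, |a j| ≤ #s * δ := by
    rw [← nsmul_eq_mul]
    exact sum_le_card_nsmul _ _ _ ha
  calc _ ≤ (∑ j ∈ s, a j ^ 2 * exp |a j|) * exp (∑ j ∈ s, |a j|) :=
        abs_prod_one_add_sub_exp_sum_le s a
    _ ≤ #s * (δ ^ 2 * exp δ) * exp (#s * δ) := by gcongr
    _ = #s * δ ^ 2 * exp ((#s + 1) * δ) := by rw [add_one_mul, exp_add]; ring

theorem abs_prod_Ico_succ_one_add_sub_exp_sum_Ico_le {a : ℕ → ℝ} {δ : ℝ} {i k : ℕ}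
    (hik : i < k) (ha : ∀ j ∈ Ico i k, |a j| ≤ δ) :
    |∏ j ∈ Ico (i + 1) k, (1 + a j) - exp (∑ j ∈ Ico i k, a j)| ≤
      (#(Ico (i + 1) k) * δ + 1) * δ * exp (#(Ico i k) * δ) := by
  set s := Ico (i + 1) k
  have hcard : #(Ico i k) = #s + 1 := by simp only [s, Nat.card_Ico]; omega
  have hai : |a i| ≤ δ := ha i (left_mem_Ico.2 hik)
  have has : ∀ j ∈ s, |a j| ≤ δ := fun j hj ↦ ha j (Ico_subset_Ico_left i.le_succ hj)
  have hS : exp (∑ j ∈ s, a j) ≤ exp (#s * δ) := by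
    rw [exp_le_exp, ← nsmul_eq_mul]
    exact sum_le_card_nsmul s _ δ fun j hj ↦ (le_abs_self _).trans (has j hj)
  have hδ : 0 ≤ δ := (abs_nonneg _).trans hai
  have hexp : |exp (a i) - 1| ≤ δ * exp δ :=
    (abs_exp_sub_one_le_mul_exp_abs (a i)).trans (by gcongr)
  rw [sum_eq_sum_Ico_succ_bot hik, exp_add, hcard]
  calc |∏ j ∈ s, (1 + a j) - exp (a i) * exp (∑ j ∈ s, a j)|
      = |(∏ j ∈ s, (1 + a j) - exp (∑ j ∈ s, a j)) -
          exp (∑ j ∈ s, a j) * (exp (a i) - 1)| := by ring_nf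
    _ ≤ |∏ j ∈ s, (1 + a j) - exp (∑ j ∈ s, a j)| + exp (∑ j ∈ s, a j) * |exp (a i) - 1| :=
        (abs_sub _ _).trans_eq (by rw [abs_mul, abs_exp])
    _ ≤ #s * δ ^ 2 * exp ((#s + 1) * δ) + exp (#s * δ) * (δ * exp δ) := by
        gcongr
        exact abs_prod_one_add_sub_exp_sum_le_of_abs_le has
    _ = (#s * δ + 1) * δ * exp (↑(#s + 1) * δ) := by push_cast; rw [add_one_mul, exp_add]; ring

end Real

theorem stmt_15 (c : ℝ) (hc : 0 < c) :
    ∃ C : ℝ, ∀ (n : ℕ), 1 ≤ n → ∀ a : ℕ → ℝ, (∀ j < n, |a j| ≤ c / n) →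
      ∀ i k : ℕ, i < k → k ≤ n →
        |(∏ j ∈ Finset.Ico (i + 1) k, (1 + a j)) -
          Real.exp (∑ j ∈ Finset.Ico i k, a j)| ≤ C / n := by
  refine ⟨c * (c + 1) * Real.exp c, fun n hn a ha i k hik hkn ↦ ?_⟩
  have hn0 : (0 : ℝ) < n := by exact_mod_cast hn
  have hcard (l : ℕ) : (#(Ico l k) : ℝ) * (c / n) ≤ c := by
    have : #(Ico l k) ≤ n := by rw [Nat.card_Ico]; omega
    rw [mul_div_assoc', div_le_iff₀ hn0, mul_comm c]
    exact mul_le_mul_of_nonneg_right (by exact_mod_cast this) hc.le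
  refine (Real.abs_prod_Ico_succ_one_add_sub_exp_sum_Ico_le hik
    fun j hj ↦ ha j ((mem_Ico.1 hj).2.trans_le hkn)).trans ?_
  calc _ ≤ (c + 1) * (c / n) * Real.exp c := by
        gcongr
        exacts [hcard (i + 1), hcard i]
    _ = c * (c + 1) * Real.exp c / n := by ring
end

section
/- Let b, σ : ℝ → ℝ with σ ∈ C²_b and b globally Lipschitz, and let φ be the flow of y' = σ(y). Define f(x,y) = exp(−∫_0^x σ'(φ(y,s)) ds) · b(φ(y,x)). Then f is C¹ in y and ∂f/∂y(x,y) = b'(φ(y,x)) − f(x,y) · ∫_0^x σ''(φ(y,s)) · ∂φ/∂x₁(y,s) ds, assuming b ∈ C¹. -/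
/-! The difference `φ z - φ y` solves the linear equation `u' = a u`, where `a s` is the
difference quotient (`dslope`) of `σ` between `φ y s` and `φ z s`; hence
`φ z x - φ y x = (z - y) * exp (∫₀ˣ a)`. Since `|a| ≤ sup |σ'|`, dominated convergence lets
`z → y` and gives `∂φ/∂x₁ (y, x) = exp (∫₀ˣ σ' (φ y s) ds)`. With `σ''` bounded, one may then
differentiate `∫₀ˣ σ' (φ y s) ds` under the integral sign, and the product rule gives the formula. -/

open MeasureTheory Filter Set intervalIntegral

theorem dslope_eq_integral_deriv {f : ℝ → ℝ} (hf : ContDiff ℝ 1 f) (p q : ℝ) :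
    dslope f p q = ∫ t in (0 : ℝ)..1, deriv f (p + t * (q - p)) := by
  rcases eq_or_ne q p with rfl | hqp
  · simp
  have hFTC := integral_unitInterval_deriv_eq_sub (f := f) (z₀ := p) (z₁ := q - p)
    ((hf.continuous_deriv le_rfl).comp (by fun_prop)).continuousOn
    (fun t _ => ((hf.differentiable one_ne_zero) _).hasDerivAt)
  rw [← sub_smul_dslope, add_sub_cancel, smul_eq_mul, smul_eq_mul] at hFTC
  simpa only [smul_eq_mul] using (mul_left_cancel₀ (sub_ne_zero.mpr hqp) hFTC).symm

theorem continuous_dslope_uncurry {f : ℝ → ℝ} (hf : ContDiff ℝ 1 f) :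
    Continuous fun pq : ℝ × ℝ => dslope f pq.1 pq.2 := by
  simp_rw [dslope_eq_integral_deriv hf]
  exact continuous_parametric_intervalIntegral_of_continuous'
    (f := fun (pq : ℝ × ℝ) t => deriv f (pq.1 + t * (pq.2 - pq.1)))
    ((hf.continuous_deriv le_rfl).comp (by fun_prop)) 0 1

theorem abs_dslope_le {f : ℝ → ℝ} {C : ℝ} (hf : Differentiable ℝ f)
    (hC : ∀ x, |deriv f x| ≤ C) (p q : ℝ) : |dslope f p q| ≤ C := by
  rcases eq_or_ne q p with rfl | hqp
  · simpa using hC q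
  have hmvt := Convex.norm_image_sub_le_of_norm_deriv_le (fun x _ => hf x) (fun x _ => hC x)
    convex_univ (mem_univ p) (mem_univ q)
  rw [dslope_of_ne _ hqp, slope_def_field, abs_div]
  exact div_le_of_le_mul₀ (abs_nonneg _) ((abs_nonneg _).trans (hC p)) hmvt

theorem exp_integral_le_of_abs_le {g : ℝ → ℝ} {C s x : ℝ} (hg : ∀ r, |g r| ≤ C)
    (hsx : |s| ≤ |x|) : Real.exp (∫ r in (0 : ℝ)..s, g r) ≤ Real.exp (C * |x|) := by
  have hC : 0 ≤ C := (abs_nonneg _).trans (hg 0)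
  have h := norm_integral_le_of_norm_le_const (a := 0) (b := s)
    (fun r _ => (Real.norm_eq_abs (g r)).trans_le (hg r))
  rw [sub_zero, Real.norm_eq_abs] at h
  exact Real.exp_le_exp.mpr ((le_abs_self _).trans (h.trans (by gcongr)))

section Flow

variable {σ : ℝ → ℝ} {φ : ℝ → ℝ → ℝ}

theorem flow_sub_flow_eq (hσ : ContDiff ℝ 1 σ) (hφ0 : ∀ x₁, φ x₁ 0 = x₁)
    (hφ : ∀ x₁ x₂, HasDerivAt (φ x₁) (σ (φ x₁ x₂)) x₂) (y z x : ℝ) :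
    φ z x - φ y x = (z - y) * Real.exp (∫ s in (0 : ℝ)..x, dslope σ (φ y s) (φ z s)) := by
  have hφc : ∀ x₁, Continuous (φ x₁) := fun x₁ =>
    continuous_iff_continuousAt.mpr fun s => (hφ x₁ s).continuousAt
  set a : ℝ → ℝ := fun s => dslope σ (φ y s) (φ z s)
  have ha : Continuous a := (continuous_dslope_uncurry hσ).comp ((hφc y).prodMk (hφc z))
  have hG : ∀ u, HasDerivAt
      (fun u => (φ z u - φ y u) * Real.exp (-∫ s in (0 : ℝ)..u, a s)) 0 u := by
    intro u
    have hA := integral_hasDerivAt_right (ha.intervalIntegrable 0 u)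
      (ha.stronglyMeasurableAtFilter _ _) ha.continuousAt
    refine (((hφ z u).sub (hφ y u)).mul hA.neg.exp).congr_deriv ?_
    simp only [Pi.sub_apply, Pi.neg_apply]
    rw [← sub_smul_dslope σ (φ y u) (φ z u), smul_eq_mul]
    ring
  have hconst := is_const_of_deriv_eq_zero (fun u => (hG u).differentiableAt)
    (fun u => (hG u).deriv) x 0
  simp only [integral_same, neg_zero, Real.exp_zero, mul_one, hφ0, Real.exp_neg] at hconst
  rw [← hconst, inv_mul_cancel_right₀ (Real.exp_pos _).ne']

theorem lipschitzWith_flow_initial {C : ℝ} (hσ : ContDiff ℝ 1 σ) (hC : ∀ p, |deriv σ p| ≤ C)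
    (hφ0 : ∀ x₁, φ x₁ 0 = x₁) (hφ : ∀ x₁ x₂, HasDerivAt (φ x₁) (σ (φ x₁ x₂)) x₂) (x : ℝ) :
    LipschitzWith (Real.exp (C * |x|)).toNNReal fun z => φ z x := by
  refine LipschitzWith.of_dist_le_mul fun z y => ?_
  rw [Real.coe_toNNReal _ (Real.exp_pos _).le, Real.dist_eq, Real.dist_eq,
    flow_sub_flow_eq hσ hφ0 hφ, abs_mul, Real.abs_exp, mul_comm]
  exact mul_le_mul_of_nonneg_right (exp_integral_le_of_abs_le
    (fun s => abs_dslope_le (hσ.differentiable one_ne_zero) hC _ _) le_rfl) (abs_nonneg _)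

theorem hasDerivAt_flow_initial_s17 {C : ℝ} (hσ : ContDiff ℝ 1 σ) (hC : ∀ p, |deriv σ p| ≤ C)
    (hφ0 : ∀ x₁, φ x₁ 0 = x₁) (hφ : ∀ x₁ x₂, HasDerivAt (φ x₁) (σ (φ x₁ x₂)) x₂) (y x : ℝ) :
    HasDerivAt (fun z => φ z x) (Real.exp (∫ s in (0 : ℝ)..x, deriv σ (φ y s))) y := by
  have hφc : ∀ x₁, Continuous (φ x₁) := fun x₁ =>
    continuous_iff_continuousAt.mpr fun s => (hφ x₁ s).continuousAt
  set I : ℝ → ℝ := fun z => ∫ s in (0 : ℝ)..x, dslope σ (φ y s) (φ z s)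
  have hI : Continuous I :=
    continuous_of_dominated_interval (bound := fun _ => C)
      (fun z => ((continuous_dslope_uncurry hσ).comp
        ((hφc y).prodMk (hφc z))).aestronglyMeasurable)
      (fun z => ae_of_all _ fun s _ => abs_dslope_le (hσ.differentiable one_ne_zero) hC _ _)
      intervalIntegrable_const
      (ae_of_all _ fun s _ => (continuous_dslope_uncurry hσ).comp
        (continuous_const.prodMk (lipschitzWith_flow_initial hσ hC hφ0 hφ s).continuous))
  have hIy : I y = ∫ s in (0 : ℝ)..x, deriv σ (φ y s) := by simp only [I, dslope_same]
  have hslope : ∀ z ∈ ({y}ᶜ : Set ℝ), Real.exp (I z) = slope (fun z => φ z x) y z := by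
    intro z hz
    rw [slope_def_field, flow_sub_flow_eq hσ hφ0 hφ,
      mul_div_cancel_left₀ _ (sub_ne_zero.mpr hz)]
  rw [hasDerivAt_iff_tendsto_slope, ← hIy]
  exact ((Real.continuous_exp.comp hI).continuousAt.tendsto.mono_left nhdsWithin_le_nhds).congr'
    (eventually_nhdsWithin_of_forall hslope)

theorem hasDerivAt_integral_deriv_comp_flow {C K : ℝ} (hσ : ContDiff ℝ 2 σ)
    (hC : ∀ p, |deriv σ p| ≤ C) (hK : ∀ p, |deriv (deriv σ) p| ≤ K)
    (hφ0 : ∀ x₁, φ x₁ 0 = x₁) (hφ : ∀ x₁ x₂, HasDerivAt (φ x₁) (σ (φ x₁ x₂)) x₂) (y x : ℝ) :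
    HasDerivAt (fun y' => ∫ s in (0 : ℝ)..x, deriv σ (φ y' s))
      (∫ s in (0 : ℝ)..x, deriv (deriv σ) (φ y s) * deriv (fun z => φ z s) y) y := by
  have hσ1 : ContDiff ℝ 1 σ := hσ.of_le (by norm_num)
  have hσ' : ContDiff ℝ 1 (deriv σ) := hσ.iterate_deriv' 1 1
  have hφc : ∀ x₁, Continuous (φ x₁) := fun x₁ =>
    continuous_iff_continuousAt.mpr fun s => (hφ x₁ s).continuousAt
  have hD := hasDerivAt_flow_initial_s17 hσ1 hC hφ0 hφ
  have hDcont : ∀ y', Continuous fun s => Real.exp (∫ r in (0 : ℝ)..s, deriv σ (φ y' r)) :=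
    fun y' => Real.continuous_exp.comp (continuous_primitive
      (fun _ _ => ((hσ1.continuous_deriv le_rfl).comp (hφc y')).intervalIntegrable _ _) 0)
  have hmain := hasDerivAt_integral_of_dominated_loc_of_deriv_le
    (F := fun y' s => deriv σ (φ y' s))
    (F' := fun y' s => deriv (deriv σ) (φ y' s) * Real.exp (∫ r in (0 : ℝ)..s, deriv σ (φ y' r)))
    (bound := fun _ => K * Real.exp (C * |x|)) (x₀ := y) (μ := volume) univ_mem
    (Eventually.of_forall fun y' =>
      ((hσ1.continuous_deriv le_rfl).comp (hφc y')).aestronglyMeasurable)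
    (((hσ1.continuous_deriv le_rfl).comp (hφc y)).intervalIntegrable _ _)
    (((hσ'.continuous_deriv le_rfl).comp (hφc y)).mul (hDcont y)).aestronglyMeasurable
    (ae_of_all _ fun s hs y' _ => by
      rw [norm_mul, Real.norm_eq_abs, Real.norm_eq_abs, Real.abs_exp]
      exact mul_le_mul (hK _) (exp_integral_le_of_abs_le (fun _ => hC _)
        (by simpa using abs_sub_left_of_mem_uIcc (a := 0) (uIoc_subset_uIcc hs)))
        (Real.exp_pos _).le ((abs_nonneg _).trans (hK 0)))
    intervalIntegrable_const
    (ae_of_all _ fun s _ y' _ =>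
      ((hσ'.differentiable one_ne_zero _).hasDerivAt).comp y' (hD y' s))
  refine hmain.2.congr_deriv (integral_congr fun s _ => ?_)
  simp only [(hD y s).deriv]

end Flow

theorem stmt_17_general (σ b : ℝ → ℝ) (hσ : ContDiff ℝ 2 σ)
    (hσb : ∃ C : ℝ, ∀ x, |σ x| ≤ C ∧ |deriv σ x| ≤ C ∧ |deriv (deriv σ) x| ≤ C)
    (hb : ContDiff ℝ 1 b)
    (φ : ℝ → ℝ → ℝ)
    (hφ0 : ∀ x₁ : ℝ, φ x₁ 0 = x₁)
    (hφ : ∀ x₁ x₂ : ℝ, HasDerivAt (φ x₁) (σ (φ x₁ x₂)) x₂)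
    (f : ℝ → ℝ → ℝ)
    (hf : ∀ x y : ℝ,
      f x y = Real.exp (-∫ s in (0 : ℝ)..x, deriv σ (φ y s)) * b (φ y x)) :
    ∀ x y : ℝ, HasDerivAt (fun y' => f x y')
      (deriv b (φ y x) -
        f x y * ∫ s in (0 : ℝ)..x, deriv (deriv σ) (φ y s) * deriv (fun z => φ z s) y)
      y := by
  obtain ⟨C, hC⟩ := hσb
  intro x y
  have hI := hasDerivAt_integral_deriv_comp_flow hσ (fun p => (hC p).2.1) (fun p => (hC p).2.2)
    hφ0 hφ y x
  have hD := hasDerivAt_flow_initial_s17 (hσ.of_le (by norm_num)) (fun p => (hC p).2.1) hφ0 hφ y x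
  have hB := (hb.differentiable one_ne_zero (φ y x)).hasDerivAt.comp y hD
  simp only [funext (hf x), hf x y]
  refine (hI.neg.exp.mul hB).congr_deriv ?_
  simp only [Pi.neg_apply, Function.comp_apply, Real.exp_neg]
  field_simp
  ring

theorem stmt_17 (σ b : ℝ → ℝ) (hσ : ContDiff ℝ 2 σ)
    (hσb : ∃ C : ℝ, ∀ x, |σ x| ≤ C ∧ |deriv σ x| ≤ C ∧ |deriv (deriv σ) x| ≤ C)
    (hb : ContDiff ℝ 1 b) (hbLip : ∃ L : NNReal, LipschitzWith L b)
    (φ : ℝ → ℝ → ℝ)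
    (hφ0 : ∀ x₁ : ℝ, φ x₁ 0 = x₁)
    (hφ : ∀ x₁ x₂ : ℝ, HasDerivAt (φ x₁) (σ (φ x₁ x₂)) x₂)
    (f : ℝ → ℝ → ℝ)
    (hf : ∀ x y : ℝ,
      f x y = Real.exp (-∫ s in (0 : ℝ)..x, deriv σ (φ y s)) * b (φ y x)) :
    ∀ x y : ℝ, HasDerivAt (fun y' => f x y')
      (deriv b (φ y x) -
        f x y * ∫ s in (0 : ℝ)..x, deriv (deriv σ) (φ y s) * deriv (fun z => φ z s) y)
      y :=
  stmt_17_general σ b hσ hσb hb φ hφ0 hφ f hf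
end

section
/- Let h : [0,1] → ℝ be a γ-Hölder continuous path with γ ∈ (1/2, 1), let b be Lipschitz and σ ∈ C²_b, and let A : [0,1] → ℝ solve A'_t = exp(−∫_0^{h(t)} σ'(φ(A_t,s)) ds) · b(φ(A_t, h(t))), A_0 = x₀, where φ is the flow of y' = σ(y). Then ‖A‖_∞ ≤ exp(c · exp(c · ‖h‖_∞)) for a constant c depending only on b, σ, σ', and x₀. -/
open Set

set_option maxHeartbeats 1000000 in
theorem stmt_18 (σ b : ℝ → ℝ) (x₀ : ℝ)
    (hσ : ContDiff ℝ 2 σ)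
    (hσb : ∃ C : ℝ, ∀ x, |σ x| ≤ C ∧ |deriv σ x| ≤ C ∧ |deriv (deriv σ) x| ≤ C)
    (hbLip : ∃ L : NNReal, LipschitzWith L b)
    (φ : ℝ → ℝ → ℝ)
    (hφ0 : ∀ x₁ : ℝ, φ x₁ 0 = x₁)
    (hφ : ∀ x₁ x₂ : ℝ, HasDerivAt (φ x₁) (σ (φ x₁ x₂)) x₂) :
    ∃ c : ℝ, 0 < c ∧
      ∀ (h A : ℝ → ℝ) (γ : ℝ) (K : NNReal) (hγ : γ ∈ Set.Ioo (1 / 2 : ℝ) 1),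
        HolderOnWith K ⟨γ, by linarith [hγ.1]⟩ h (Set.Icc 0 1) →
        A 0 = x₀ →
        (∀ t ∈ Set.Icc (0 : ℝ) 1,
          HasDerivAt A
            (Real.exp (-∫ s in (0 : ℝ)..h t, deriv σ (φ (A t) s)) * b (φ (A t) (h t))) t) →
        ∀ t ∈ Set.Icc (0 : ℝ) 1,
          |A t| ≤ Real.exp (c * Real.exp (c * ⨆ u : Set.Icc (0 : ℝ) 1, |h u|)) := by
  classical
  obtain ⟨C, hC⟩ := hσb
  obtain ⟨L, hL⟩ := hbLip
  have hC0 : (0 : ℝ) ≤ C := le_trans (abs_nonneg _) (hC 0).1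
  have hL0 : (0 : ℝ) ≤ (L : ℝ) := L.coe_nonneg
  set D : ℝ := |x₀| + |b 0| + (L : ℝ) * C + 1 with hDdef
  have hD1 : (1 : ℝ) ≤ D := by
    have := abs_nonneg x₀
    have := abs_nonneg (b 0)
    have := mul_nonneg hL0 hC0
    rw [hDdef]; linarith
  set c : ℝ := max 1 (max C (Real.log D + (L : ℝ) + 2)) with hcdef
  have hc1 : (1 : ℝ) ≤ c := le_max_left _ _
  have hcC : C ≤ c := le_trans (le_max_left _ _) (le_max_right _ _)
  have hc2 : Real.log D + (L : ℝ) + 2 ≤ c :=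
    le_trans (le_max_right _ _) (le_max_right _ _)
  refine ⟨c, by linarith, ?_⟩
  intro h A γ K hγ hHol hA0 hA'
  set H : ℝ := ⨆ u : Set.Icc (0 : ℝ) 1, |h u| with hHdef
  have h0mem : (0 : ℝ) ∈ Set.Icc (0 : ℝ) 1 := by constructor <;> norm_num
  have hhb : ∀ u ∈ Set.Icc (0 : ℝ) 1, |h u| ≤ |h 0| + (K : ℝ) := by
    intro u hu
    have hed : edist u (0 : ℝ) ≤ 1 := by
      rw [edist_dist]
      refine ENNReal.ofReal_le_one.2 ?_
      rw [Real.dist_eq, sub_zero, abs_of_nonneg hu.1]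
      exact hu.2
    have he2 := hHol.edist_le_of_le hu h0mem hed
    rw [ENNReal.one_rpow, mul_one] at he2
    have hd : dist (h u) (h 0) ≤ (K : ℝ) := by
      have := edist_le_coe.1 he2
      exact_mod_cast this
    simp only [Real.dist_eq] at hd
    have habs := abs_sub_abs_le_abs_sub (h u) (h 0)
    linarith
  have hbdd : BddAbove (Set.range fun u : Set.Icc (0 : ℝ) 1 => |h u|) := by
    refine ⟨|h 0| + (K : ℝ), ?_⟩
    rintro x ⟨u, rfl⟩
    exact hhb u u.2
  have hle : ∀ u ∈ Set.Icc (0 : ℝ) 1, |h u| ≤ H := fun u hu =>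
    le_ciSup hbdd (⟨u, hu⟩ : Set.Icc (0 : ℝ) 1)
  have hH0 : (0 : ℝ) ≤ H := le_trans (abs_nonneg (h 0)) (hle 0 h0mem)
  -- bound on φ: |φ a z| ≤ |a| + C * |z|
  have hφbd : ∀ a z : ℝ, |φ a z| ≤ |a| + C * |z| := by
    intro a z
    have key := (convex_univ : Convex ℝ (Set.univ : Set ℝ)).norm_image_sub_le_of_norm_hasDerivWithin_le
      (f := φ a) (f' := fun x => σ (φ a x)) (C := C)
      (fun x _ => (hφ a x).hasDerivWithinAt) (fun x _ => (hC (φ a x)).1)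
      (Set.mem_univ (0 : ℝ)) (Set.mem_univ z)
    rw [hφ0 a] at key
    simp only [Real.norm_eq_abs, sub_zero] at key
    have habs := abs_sub_abs_le_abs_sub (φ a z) a
    linarith
  have hbbd : ∀ x : ℝ, |b x| ≤ |b 0| + (L : ℝ) * |x| := by
    intro x
    have hd := hL.dist_le_mul x 0
    simp only [Real.dist_eq, sub_zero] at hd
    have habs := abs_sub_abs_le_abs_sub (b x) (b 0)
    linarith
  set K' : ℝ := Real.exp (C * H) * ((L : ℝ) + 1) with hK'def
  set ε : ℝ := Real.exp (C * H) * (|b 0| + (L : ℝ) * C * H) with hεdef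
  have hexppos : (0 : ℝ) < Real.exp (C * H) := Real.exp_pos _
  have hX0 : (0 : ℝ) ≤ |b 0| + (L : ℝ) * C * H := by
    have := abs_nonneg (b 0)
    have := mul_nonneg (mul_nonneg hL0 hC0) hH0
    linarith
  have hK'pos : (0 : ℝ) < K' := by rw [hK'def]; positivity
  have hε0 : (0 : ℝ) ≤ ε := by rw [hεdef]; exact mul_nonneg hexppos.le hX0
  have hcont : ContinuousOn A (Set.Icc 0 1) := fun t ht =>
    (hA' t ht).continuousAt.continuousWithinAt
  have hderiv : ∀ t ∈ Set.Ico (0 : ℝ) 1, HasDerivWithinAt A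
      (Real.exp (-∫ s in (0 : ℝ)..h t, deriv σ (φ (A t) s)) * b (φ (A t) (h t))) (Set.Ici t) t :=
    fun t ht => (hA' t (Set.Ico_subset_Icc_self ht)).hasDerivWithinAt
  have hbound : ∀ t ∈ Set.Ico (0 : ℝ) 1,
      ‖Real.exp (-∫ s in (0 : ℝ)..h t, deriv σ (φ (A t) s)) * b (φ (A t) (h t))‖
        ≤ K' * ‖A t‖ + ε := by
    intro t ht
    have htI : t ∈ Set.Icc (0 : ℝ) 1 := Set.Ico_subset_Icc_self ht
    have hhH : |h t| ≤ H := hle t htI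
    have hint : |∫ s in (0 : ℝ)..h t, deriv σ (φ (A t) s)| ≤ C * H := by
      have key := intervalIntegral.norm_integral_le_of_norm_le_const
        (C := C) (a := (0 : ℝ)) (b := h t) (f := fun s => deriv σ (φ (A t) s))
        (fun s _ => (hC (φ (A t) s)).2.1)
      rw [sub_zero] at key
      calc |∫ s in (0 : ℝ)..h t, deriv σ (φ (A t) s)| ≤ C * |h t| := key
        _ ≤ C * H := mul_le_mul_of_nonneg_left hhH hC0
    have hexp : Real.exp (-∫ s in (0 : ℝ)..h t, deriv σ (φ (A t) s)) ≤ Real.exp (C * H) := by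
      apply Real.exp_le_exp.2
      have := neg_abs_le (∫ s in (0 : ℝ)..h t, deriv σ (φ (A t) s))
      linarith
    have hbφ : |b (φ (A t) (h t))| ≤ |b 0| + (L : ℝ) * (|A t| + C * H) := by
      have h1 : |φ (A t) (h t)| ≤ |A t| + C * |h t| := hφbd _ _
      have h2 : C * |h t| ≤ C * H := mul_le_mul_of_nonneg_left hhH hC0
      have h3 := hbbd (φ (A t) (h t))
      have h4 : (L : ℝ) * |φ (A t) (h t)| ≤ (L : ℝ) * (|A t| + C * H) :=
        mul_le_mul_of_nonneg_left (by linarith) hL0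
      linarith
    rw [Real.norm_eq_abs, abs_mul, Real.abs_exp, Real.norm_eq_abs]
    have hnn : (0 : ℝ) ≤ |b 0| + (L : ℝ) * (|A t| + C * H) := by positivity
    calc Real.exp (-∫ s in (0 : ℝ)..h t, deriv σ (φ (A t) s)) * |b (φ (A t) (h t))|
        ≤ Real.exp (C * H) * (|b 0| + (L : ℝ) * (|A t| + C * H)) :=
          mul_le_mul hexp hbφ (abs_nonneg _) hexppos.le
      _ ≤ K' * |A t| + ε := by
          rw [hK'def, hεdef]
          have hh : (0 : ℝ) ≤ Real.exp (C * H) * |A t| :=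
            mul_nonneg hexppos.le (abs_nonneg _)
          nlinarith
  have hA0' : ‖A 0‖ ≤ |x₀| := by rw [Real.norm_eq_abs, hA0]
  have hgron := norm_le_gronwallBound_of_norm_deriv_right_le hcont hderiv hA0' hbound
  intro t ht
  have hGt := hgron t ht
  rw [Real.norm_eq_abs] at hGt
  have hgb : gronwallBound |x₀| K' ε (t - 0) ≤ (|x₀| + (|b 0| + (L : ℝ) * C * H)) * Real.exp K' := by
    rw [gronwallBound_of_K_ne_0 (ne_of_gt hK'pos)]
    have ht1 : t - 0 ≤ 1 := by rw [sub_zero]; exact ht.2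
    have hKt : K' * (t - 0) ≤ K' := by nlinarith
    have hE : Real.exp (K' * (t - 0)) ≤ Real.exp K' := Real.exp_le_exp.2 hKt
    have hE0 : (0 : ℝ) < Real.exp (K' * (t - 0)) := Real.exp_pos _
    have hEp : (0 : ℝ) < Real.exp K' := Real.exp_pos _
    have hdiv0 : (0 : ℝ) ≤ ε / K' := div_nonneg hε0 hK'pos.le
    have hdiv : ε / K' ≤ |b 0| + (L : ℝ) * C * H := by
      rw [div_le_iff₀ hK'pos, hεdef, hK'def]
      nlinarith [mul_nonneg hexppos.le hX0]
    have s1 : |x₀| * Real.exp (K' * (t - 0)) ≤ |x₀| * Real.exp K' :=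
      mul_le_mul_of_nonneg_left hE (abs_nonneg _)
    have s2 : ε / K' * (Real.exp (K' * (t - 0)) - 1) ≤ ε / K' * Real.exp K' :=
      mul_le_mul_of_nonneg_left (by linarith) hdiv0
    have s3 : ε / K' * Real.exp K' ≤ (|b 0| + (L : ℝ) * C * H) * Real.exp K' :=
      mul_le_mul_of_nonneg_right hdiv hEp.le
    have expand : (|x₀| + (|b 0| + (L : ℝ) * C * H)) * Real.exp K'
        = |x₀| * Real.exp K' + (|b 0| + (L : ℝ) * C * H) * Real.exp K' := by ring
    rw [expand]
    linarith
  have hstep : |A t| ≤ (|x₀| + (|b 0| + (L : ℝ) * C * H)) * Real.exp K' := le_trans hGt hgb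
  have hDexp : |x₀| + (|b 0| + (L : ℝ) * C * H) ≤ D * Real.exp H := by
    have h1 : (1 : ℝ) + H ≤ Real.exp H := by
      have := Real.add_one_le_exp H; linarith
    have hD0 : (0 : ℝ) < D := by linarith
    have h2 : |x₀| + (|b 0| + (L : ℝ) * C * H) ≤ D * (1 + H) := by
      rw [hDdef]
      have := abs_nonneg x₀
      have := abs_nonneg (b 0)
      have := mul_nonneg (mul_nonneg hL0 hC0) hH0
      nlinarith
    calc |x₀| + (|b 0| + (L : ℝ) * C * H) ≤ D * (1 + H) := h2
      _ ≤ D * Real.exp H := mul_le_mul_of_nonneg_left h1 hD0.le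
  have hfinal : D * Real.exp H * Real.exp K' ≤ Real.exp (c * Real.exp (c * H)) := by
    have hD0 : (0 : ℝ) < D := by linarith
    have heq : D * Real.exp H * Real.exp K' = Real.exp (Real.log D + H + K') := by
      rw [Real.exp_add, Real.exp_add, Real.exp_log hD0]
    rw [heq]
    apply Real.exp_le_exp.2
    have hE1 : (1 : ℝ) ≤ Real.exp (c * H) := Real.one_le_exp (by positivity)
    have hHE : H ≤ Real.exp (c * H) := by
      have h1 := Real.add_one_le_exp (c * H)
      nlinarith
    have hK'E : K' ≤ ((L : ℝ) + 1) * Real.exp (c * H) := by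
      rw [hK'def]
      have h1 : Real.exp (C * H) ≤ Real.exp (c * H) :=
        Real.exp_le_exp.2 (mul_le_mul_of_nonneg_right hcC hH0)
      nlinarith [Real.exp_pos (C * H)]
    have hlog : (0 : ℝ) ≤ Real.log D := Real.log_nonneg hD1
    have hlogE : Real.log D ≤ Real.log D * Real.exp (c * H) := by nlinarith
    nlinarith
  calc |A t| ≤ (|x₀| + (|b 0| + (L : ℝ) * C * H)) * Real.exp K' := hstep
    _ ≤ D * Real.exp H * Real.exp K' := by
        have := Real.exp_pos K'
        exact mul_le_mul_of_nonneg_right hDexp this.le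
    _ ≤ Real.exp (c * Real.exp (c * H)) := hfinal
end
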